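/- arXiv:2206.08392 — 6 statements merged into one kernel-verified Lean document; each statement's English description precedes it below -/
import Mathlib

section
/- Let f ∈ F[X] be a polynomial and x ∈ F with f'(x) ≠ 0. If γ(f,x)·|x - y| < 1, then f'(y) ≠ 0 and |f'(y)| = |f'(x)|. -/
open Polynomial Filter

noncomputable def sbeta {F : Type*} [NormedField F] (f : F[X]) (x : F) : ℝ :=
  ‖f.eval x / f.derivative.eval x‖

noncomputable def sgamma {F : Type*} [NormedField F] (f : F[X]) (x : F) : ℝ :=
  ⨆ k : ℕ,
    ‖((⇑(derivative (R := F)))^[k + 2] f).eval x /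
        (((k + 2).factorial : F) * f.derivative.eval x)‖ ^ ((1 : ℝ) / (k + 1))

noncomputable def salpha {F : Type*} [NormedField F] (f : F[X]) (x : F) : ℝ :=
  sbeta f x * sgamma f x

noncomputable def newton {F : Type*} [NormedField F] (f : F[X]) (x : F) : F :=
  x - f.eval x / f.derivative.eval x

lemma factorial_mul_hasseDeriv_eval {F : Type*} [NormedField F] (k : ℕ) (p : F[X]) (x : F) :
    (k.factorial : F) * (hasseDeriv k p).eval x = ((⇑(derivative (R := F)))^[k] p).eval x := by
  have := congrFun (Polynomial.factorial_smul_hasseDeriv (R := F) k) p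
  rw [← this]
  simp [nsmul_eq_mul]

lemma sgamma_bddAbove {F : Type*} [NormedField F] (f : F[X]) (x : F) :
    BddAbove (Set.range fun k : ℕ =>
      ‖((⇑(derivative (R := F)))^[k + 2] f).eval x /
        (((k + 2).factorial : F) * f.derivative.eval x)‖ ^ ((1 : ℝ) / (k + 1))) := by
  set φ : ℕ → ℝ := fun k =>
      ‖((⇑(derivative (R := F)))^[k + 2] f).eval x /
        (((k + 2).factorial : F) * f.derivative.eval x)‖ ^ ((1 : ℝ) / (k + 1)) with hφ
  have hzero : ∀ k, f.natDegree ≤ k → φ k = 0 := by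
    intro k hk
    have hd : ((⇑(derivative (R := F)))^[k + 2] f) = 0 :=
      iterate_derivative_eq_zero (by omega)
    simp only [hφ, hd, eval_zero, zero_div, norm_zero]
    exact Real.zero_rpow (by positivity : (1 : ℝ) / (k + 1) ≠ 0)
  refine Set.Finite.bddAbove (Set.Finite.subset
    (Set.Finite.union ((Set.finite_Iio (f.natDegree)).image φ) (Set.finite_singleton 0)) ?_)
  rintro _ ⟨k, rfl⟩
  rcases lt_or_ge k f.natDegree with hk | hk
  · exact Or.inl ⟨k, hk, rfl⟩
  · exact Or.inr (hzero k hk)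

/-- If `γ(f,x)·|x-y| < 1` then `f'(y) ≠ 0` and `|f'(y)| = |f'(x)|`. -/
theorem ultrametric_deriv_norm_invariance
    {F : Type*} [NormedField F] [IsUltrametricDist F] [CompleteSpace F] [CharZero F]
    (f : F[X]) (x y : F) (hx : f.derivative.eval x ≠ 0)
    (h : sgamma f x * ‖x - y‖ < 1) :
    f.derivative.eval y ≠ 0 ∧ ‖f.derivative.eval y‖ = ‖f.derivative.eval x‖ := by
  set g := f.derivative with hg
  set γ := sgamma f x with hγ
  have hγ0 : 0 ≤ γ := Real.iSup_nonneg fun k => Real.rpow_nonneg (norm_nonneg _) _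
  set c : ℝ := γ * ‖x - y‖ with hc
  have hc0 : 0 ≤ c := mul_nonneg hγ0 (norm_nonneg _)
  have hax : 0 < ‖g.eval x‖ := norm_pos_iff.mpr hx
  -- per-term bound
  have key : ∀ i : ℕ, ‖(hasseDeriv (i + 1) g).eval x * (y - x) ^ (i + 1)‖ ≤ ‖g.eval x‖ * c := by
    intro i
    set t : ℝ := ‖((⇑(derivative (R := F)))^[i + 2] f).eval x /
        (((i + 2).factorial : F) * g.eval x)‖ with ht
    have ht0 : 0 ≤ t := norm_nonneg _
    have hle : t ^ ((1 : ℝ) / (i + 1)) ≤ γ := le_ciSup (sgamma_bddAbove f x) i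
    have htg : t ≤ γ ^ (i + 1) := by
      have : t = (t ^ ((1 : ℝ) / (i + 1))) ^ (i + 1) := by
        rw [← Real.rpow_natCast (t ^ ((1 : ℝ) / (i + 1))) (i + 1), ← Real.rpow_mul ht0]
        push_cast
        rw [one_div_mul_cancel (by positivity : ((i : ℝ) + 1) ≠ 0), Real.rpow_one]
      rw [this]
      exact pow_le_pow_left₀ (Real.rpow_nonneg ht0 _) hle _
    -- hasseDeriv relation
    have hh : ((i + 1).factorial : F) * (hasseDeriv (i + 1) g).eval x
        = ((⇑(derivative (R := F)))^[i + 2] f).eval x := by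
      rw [factorial_mul_hasseDeriv_eval]
      rfl
    have hfacne : ((i + 1).factorial : F) ≠ 0 := by
      exact_mod_cast Nat.cast_ne_zero.mpr (i + 1).factorial_ne_zero
    have heq : (hasseDeriv (i + 1) g).eval x
        = ((i + 2 : ℕ) : F) * (((⇑(derivative (R := F)))^[i + 2] f).eval x /
          (((i + 2).factorial : F) * g.eval x)) * g.eval x := by
      have h2ne : ((i + 2).factorial : F) ≠ 0 :=
        Nat.cast_ne_zero.mpr (i + 2).factorial_ne_zero
      rw [← hh]
      field_simp
      push_cast [Nat.factorial_succ (i + 1)]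
      ring
    have hnorm : ‖(hasseDeriv (i + 1) g).eval x‖ ≤ t * ‖g.eval x‖ := by
      rw [heq, norm_mul, norm_mul]
      have h2 : ‖((i + 2 : ℕ) : F)‖ ≤ 1 := IsUltrametricDist.norm_natCast_le_one F (i + 2)
      calc ‖((i + 2 : ℕ) : F)‖ * t * ‖g.eval x‖ ≤ 1 * t * ‖g.eval x‖ := by
            gcongr
        _ = t * ‖g.eval x‖ := by ring
    calc ‖(hasseDeriv (i + 1) g).eval x * (y - x) ^ (i + 1)‖
        = ‖(hasseDeriv (i + 1) g).eval x‖ * ‖y - x‖ ^ (i + 1) := by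
          rw [norm_mul, norm_pow]
      _ ≤ (t * ‖g.eval x‖) * ‖y - x‖ ^ (i + 1) := by
          gcongr
      _ ≤ (γ ^ (i + 1) * ‖g.eval x‖) * ‖y - x‖ ^ (i + 1) := by
          gcongr
      _ = ‖g.eval x‖ * c ^ (i + 1) := by
          rw [hc, mul_pow, norm_sub_rev]; ring
      _ ≤ ‖g.eval x‖ * c ^ 1 :=
          mul_le_mul_of_nonneg_left (pow_le_pow_of_le_one hc0 h.le (by omega)) (norm_nonneg _)
      _ = ‖g.eval x‖ * c := by rw [pow_one]
  -- Taylor expansion of g at x evaluated at y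
  have taylor_sum : g.eval y = ∑ i ∈ Finset.range (g.natDegree + 1),
      (hasseDeriv i g).eval x * (y - x) ^ i := by
    have h1 : g.eval y = (taylor x g).eval (y - x) := (taylor_eval_sub x g y).symm
    rw [h1, eval_eq_sum_range' (n := g.natDegree + 1) (by rw [natDegree_taylor]; omega)]
    exact Finset.sum_congr rfl fun i _ => by rw [taylor_coeff]
  have hsplit : g.eval y - g.eval x = ∑ i ∈ Finset.range g.natDegree,
      (hasseDeriv (i + 1) g).eval x * (y - x) ^ (i + 1) := by
    rw [taylor_sum, Finset.sum_range_succ']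
    simp [hasseDeriv_zero]
  have hlt : ‖g.eval y - g.eval x‖ < ‖g.eval x‖ := by
    rw [hsplit]
    have hsum : ‖∑ i ∈ Finset.range g.natDegree,
        (hasseDeriv (i + 1) g).eval x * (y - x) ^ (i + 1)‖ ≤ ‖g.eval x‖ * c :=
      IsUltrametricDist.norm_sum_le_of_forall_le_of_nonneg
        (mul_nonneg (norm_nonneg _) hc0) (fun i _ => key i)
    calc _ ≤ ‖g.eval x‖ * c := hsum
      _ < ‖g.eval x‖ * 1 := by exact mul_lt_mul_of_pos_left h hax
      _ = ‖g.eval x‖ := mul_one _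
  have heqnorm : ‖g.eval y‖ = ‖g.eval x‖ := by
    have h1 := IsUltrametricDist.norm_add_le_max (g.eval x) (g.eval y - g.eval x)
    have h2 := IsUltrametricDist.norm_add_le_max (g.eval y) (g.eval x - g.eval y)
    rw [add_sub_cancel] at h1 h2
    have h3 : ‖g.eval x - g.eval y‖ < ‖g.eval x‖ := by rw [norm_sub_rev]; exact hlt
    refine le_antisymm (h1.trans (max_le le_rfl hlt.le)) ?_
    rcases max_cases ‖g.eval y‖ ‖g.eval x - g.eval y‖ with ⟨he, _⟩ | ⟨he, hle⟩
    · rw [he] at h2; exact h2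
    · rw [he] at h2
      exact absurd (h2.trans_lt h3) (lt_irrefl _)
  exact ⟨norm_pos_iff.mp (heqnorm ▸ hax), heqnorm⟩
end

section
/- Let f ∈ F[X] and x ∈ F with f'(x) ≠ 0. If γ(f,x)·|x - y| < 1, then f'(y) ≠ 0 and γ(f,y) = γ(f,x). -/
open Polynomial Filter

set_option linter.unusedSectionVars false

section Aux

variable {F : Type*} [NormedField F] [CharZero F]

/-- The k-th term of the sup defining sgamma, hasseDeriv form. -/
noncomputable def sgTerm (f : F[X]) (x : F) (k : ℕ) : ℝ :=
  ‖(hasseDeriv (k + 2) f).eval x / f.derivative.eval x‖ ^ ((1 : ℝ) / (k + 1))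

lemma sgamma_eq_hasse (f : F[X]) (x : F) : sgamma f x = ⨆ k : ℕ, sgTerm f x k := by
  unfold sgamma sgTerm
  congr 1; funext k
  congr 2
  have h1 : (⇑(derivative (R := F)))^[k + 2] f = (k + 2).factorial • hasseDeriv (k + 2) f := by
    rw [← Polynomial.factorial_smul_hasseDeriv (k + 2)]
    rfl
  rw [h1, nsmul_eq_mul, eval_mul, eval_natCast, mul_div_mul_left]
  exact_mod_cast (Nat.factorial_ne_zero (k + 2))

lemma sgTerm_nonneg (f : F[X]) (x : F) (k : ℕ) : 0 ≤ sgTerm f x k :=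
  Real.rpow_nonneg (norm_nonneg _) _

lemma sgTerm_eventually_zero (f : F[X]) (x : F) (k : ℕ) (hk : f.natDegree < k + 2) :
    sgTerm f x k = 0 := by
  have h0 : hasseDeriv (k + 2) f = 0 := by
    exact Polynomial.hasseDeriv_eq_zero_of_lt_natDegree f _ hk
  unfold sgTerm
  rw [h0]
  simp only [eval_zero, zero_div, norm_zero]
  rw [Real.zero_rpow]
  positivity

lemma bddAbove_sgTerm (f : F[X]) (x : F) : BddAbove (Set.range (sgTerm f x)) := by
  apply Set.Finite.bddAbove
  apply Set.Finite.subset (Set.Finite.union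
    (Set.finite_range fun k : Fin (f.natDegree + 1) => sgTerm f x k) (Set.finite_singleton 0))
  rintro _ ⟨k, rfl⟩
  by_cases hk : k < f.natDegree + 1
  · exact Or.inl ⟨⟨k, hk⟩, rfl⟩
  · exact Or.inr (sgTerm_eventually_zero f x k (by omega))

lemma sgamma_nonneg (f : F[X]) (x : F) : 0 ≤ sgamma f x := by
  rw [sgamma_eq_hasse]
  exact Real.iSup_nonneg (sgTerm_nonneg f x)

/-- Key bound from the definition of sgamma: `‖f^{(j+1)}(x)/(j+1)!‖ ≤ γ^j ‖f'(x)‖`. -/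
lemma hasse_le (f : F[X]) (x : F) (hx : f.derivative.eval x ≠ 0) (j : ℕ) :
    ‖(hasseDeriv (j + 1) f).eval x‖ ≤ sgamma f x ^ j * ‖f.derivative.eval x‖ := by
  cases j with
  | zero => simp [Polynomial.hasseDeriv_one']
  | succ k =>
    have ht : sgTerm f x k ≤ sgamma f x := by
      rw [sgamma_eq_hasse]
      exact le_ciSup (bddAbove_sgTerm f x) k
    set a : ℝ := ‖(hasseDeriv (k + 2) f).eval x / f.derivative.eval x‖ with ha
    have ha0 : 0 ≤ a := norm_nonneg _
    have haeq : a = sgTerm f x k ^ (k + 1) := by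
      rw [sgTerm, ← ha, ← Real.rpow_natCast (a ^ _) (k + 1), ← Real.rpow_mul ha0, one_div]
      push_cast
      rw [inv_mul_cancel₀ (by positivity), Real.rpow_one]
    have h1 : a ≤ sgamma f x ^ (k + 1) := by
      rw [haeq]
      exact pow_le_pow_left₀ (sgTerm_nonneg f x k) ht _
    have : ‖(hasseDeriv (k + 2) f).eval x‖ = a * ‖f.derivative.eval x‖ := by
      rw [ha, norm_div, div_mul_cancel₀]
      exact norm_ne_zero_iff.mpr hx
    rw [show k + 1 + 1 = k + 2 from rfl, this]
    exact mul_le_mul_of_nonneg_right h1 (norm_nonneg _)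

lemma hasse_taylor (g : F[X]) (x y : F) {N : ℕ} (hN : g.natDegree < N) :
    g.eval y = ∑ m ∈ Finset.range N, (hasseDeriv m g).eval x * (y - x) ^ m := by
  conv_lhs => rw [← Polynomial.taylor_eval_sub x g y]
  rw [Polynomial.eval_eq_sum_range' (by rwa [Polynomial.natDegree_taylor])]
  simp [Polynomial.taylor_coeff]

variable [IsUltrametricDist F]

/-- Bound on each Taylor term of a Hasse derivative. -/
lemma term_bound (f : F[X]) (x y : F) (hx : f.derivative.eval x ≠ 0) (j m : ℕ) :
    ‖(hasseDeriv m (hasseDeriv (j + 1) f)).eval x * (y - x) ^ m‖ ≤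
      (sgamma f x * ‖x - y‖) ^ m * (sgamma f x ^ j * ‖f.derivative.eval x‖) := by
  have hcomp : hasseDeriv m (hasseDeriv (j + 1) f)
      = ((m + (j + 1)).choose m : F[X]) * hasseDeriv (m + (j + 1)) f := by
    rw [← LinearMap.comp_apply, Polynomial.hasseDeriv_comp, LinearMap.smul_apply,
      nsmul_eq_mul]
  rw [hcomp, eval_mul, eval_natCast]
  have h1 : ‖((m + (j + 1)).choose m : F)‖ ≤ 1 := by
    exact_mod_cast IsUltrametricDist.norm_natCast_le_one F _
  have h2 : ‖(hasseDeriv (m + (j + 1)) f).eval x‖ ≤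
      sgamma f x ^ (m + j) * ‖f.derivative.eval x‖ := by
    have := hasse_le f x hx (m + j)
    rwa [(show (m + j) + 1 = m + (j + 1) by ring)] at this
  calc ‖((m + (j + 1)).choose m : F) * (hasseDeriv (m + (j + 1)) f).eval x * (y - x) ^ m‖
      = ‖((m + (j + 1)).choose m : F)‖ * ‖(hasseDeriv (m + (j + 1)) f).eval x‖ *
        ‖(y - x)‖ ^ m := by rw [norm_mul, norm_mul, norm_pow]
    _ ≤ 1 * (sgamma f x ^ (m + j) * ‖f.derivative.eval x‖) * ‖x - y‖ ^ m := by
        rw [norm_sub_rev y x]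
        exact mul_le_mul (mul_le_mul h1 h2 (norm_nonneg _) zero_le_one) le_rfl
          (pow_nonneg (norm_nonneg _) m)
          (mul_nonneg zero_le_one
            (mul_nonneg (pow_nonneg (sgamma_nonneg f x) _) (norm_nonneg _)))
    _ = (sgamma f x * ‖x - y‖) ^ m * (sgamma f x ^ j * ‖f.derivative.eval x‖) := by
        rw [one_mul, mul_pow, pow_add]; ring

/-- Main step: invariance of `‖f'‖` and one-sided inequality for sgamma. -/
lemma step (f : F[X]) (x y : F) (hx : f.derivative.eval x ≠ 0)
    (h : sgamma f x * ‖x - y‖ < 1) :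
    ‖f.derivative.eval y‖ = ‖f.derivative.eval x‖ ∧ sgamma f y ≤ sgamma f x := by
  set γ := sgamma f x with hγ
  set c := ‖x - y‖ with hc
  have hγ0 : 0 ≤ γ := sgamma_nonneg f x
  have hc0 : 0 ≤ c := norm_nonneg _
  have hγc0 : 0 ≤ γ * c := by positivity
  set N := f.natDegree + 1 with hN
  have hdeg : ∀ j : ℕ, (hasseDeriv j f).natDegree < N := fun j =>
    lt_of_le_of_lt ((Polynomial.natDegree_hasseDeriv_le f j).trans (Nat.sub_le _ _))
      (Nat.lt_succ_self _)
  -- norm of f' at y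
  have hderiv : ‖f.derivative.eval y‖ = ‖f.derivative.eval x‖ := by
    have hexp : f.derivative.eval y = ∑ m ∈ Finset.range (N + 1),
        (hasseDeriv m (hasseDeriv 1 f)).eval x * (y - x) ^ m := by
      rw [← Polynomial.hasseDeriv_one']
      exact hasse_taylor _ x y ((hdeg 1).trans (Nat.lt_succ_self _))
    rw [Finset.sum_range_succ'] at hexp
    have h00 : (hasseDeriv 0 (hasseDeriv 1 f)).eval x * (y - x) ^ 0
        = f.derivative.eval x := by
      simp [Polynomial.hasseDeriv_zero, Polynomial.hasseDeriv_one']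
    have hdiff : ‖f.derivative.eval y - f.derivative.eval x‖ ≤ γ * c * ‖f.derivative.eval x‖ := by
      rw [hexp, h00, add_sub_cancel_right]
      apply IsUltrametricDist.norm_sum_le_of_forall_le_of_nonneg (by positivity)
      intro m _
      calc ‖(hasseDeriv (m + 1) (hasseDeriv 1 f)).eval x * (y - x) ^ (m + 1)‖
          ≤ (γ * c) ^ (m + 1) * (γ ^ 0 * ‖f.derivative.eval x‖) := term_bound f x y hx 0 (m + 1)
        _ ≤ (γ * c) * (γ ^ 0 * ‖f.derivative.eval x‖) := by
            apply mul_le_mul_of_nonneg_right _ (by positivity)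
            exact pow_le_of_le_one hγc0 h.le (Nat.succ_ne_zero m)
        _ = γ * c * ‖f.derivative.eval x‖ := by ring
    have hlt : ‖f.derivative.eval y - f.derivative.eval x‖ < ‖f.derivative.eval x‖ := by
      refine hdiff.trans_lt ?_
      have hfx : 0 < ‖f.derivative.eval x‖ := norm_pos_iff.mpr hx
      calc γ * c * ‖f.derivative.eval x‖ < 1 * ‖f.derivative.eval x‖ :=
            (mul_lt_mul_of_pos_right h hfx)
        _ = ‖f.derivative.eval x‖ := one_mul _
    have := IsUltrametricDist.norm_add_eq_max_of_norm_ne_norm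
      (x := f.derivative.eval y - f.derivative.eval x) (y := f.derivative.eval x) hlt.ne
    rw [sub_add_cancel] at this
    rw [this, max_eq_right hlt.le]
  refine ⟨hderiv, ?_⟩
  -- bound sgamma at y
  have hγc1 : ∀ m : ℕ, (γ * c) ^ m ≤ 1 := fun m => pow_le_one₀ hγc0 h.le
  have hy : f.derivative.eval y ≠ 0 := by
    rw [← norm_ne_zero_iff, hderiv, norm_ne_zero_iff]; exact hx
  rw [sgamma_eq_hasse]
  apply ciSup_le
  intro k
  have hbound : ‖(hasseDeriv (k + 2) f).eval y‖ ≤ γ ^ (k + 1) * ‖f.derivative.eval x‖ := by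
    rw [hasse_taylor (hasseDeriv (k + 2) f) x y (hdeg (k + 2))]
    apply IsUltrametricDist.norm_sum_le_of_forall_le_of_nonneg (by positivity)
    intro m _
    calc ‖(hasseDeriv m (hasseDeriv (k + 2) f)).eval x * (y - x) ^ m‖
        ≤ (γ * c) ^ m * (γ ^ (k + 1) * ‖f.derivative.eval x‖) := by
          simpa [show k + 2 = (k + 1) + 1 from rfl] using term_bound f x y hx (k + 1) m
      _ ≤ 1 * (γ ^ (k + 1) * ‖f.derivative.eval x‖) :=
          mul_le_mul_of_nonneg_right (hγc1 m) (by positivity)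
      _ = γ ^ (k + 1) * ‖f.derivative.eval x‖ := one_mul _
  have hterm : sgTerm f y k ≤ γ := by
    unfold sgTerm
    have hq : ‖(hasseDeriv (k + 2) f).eval y / f.derivative.eval y‖ ≤ γ ^ (k + 1) := by
      rw [norm_div, hderiv, div_le_iff₀ (norm_pos_iff.mpr hx)]
      exact hbound
    calc ‖(hasseDeriv (k + 2) f).eval y / f.derivative.eval y‖ ^ ((1 : ℝ) / (k + 1))
        ≤ (γ ^ (k + 1)) ^ ((1 : ℝ) / (k + 1)) :=
          Real.rpow_le_rpow (norm_nonneg _) hq (by positivity)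
      _ = γ := by
          rw [← Real.rpow_natCast γ (k + 1), ← Real.rpow_mul hγ0, one_div]
          push_cast
          rw [mul_inv_cancel₀ (by positivity), Real.rpow_one]
  exact hterm

end Aux

/-- If `γ(f,x)·|x-y| < 1` then `f'(y) ≠ 0` and `γ(f,y) = γ(f,x)`. -/
theorem ultrametric_gamma_invariance
    {F : Type*} [NormedField F] [IsUltrametricDist F] [CompleteSpace F] [CharZero F]
    (f : F[X]) (x y : F) (hx : f.derivative.eval x ≠ 0)
    (h : sgamma f x * ‖x - y‖ < 1) :
    f.derivative.eval y ≠ 0 ∧ sgamma f y = sgamma f x := by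
  obtain ⟨heq, hle⟩ := step f x y hx h
  have hy : f.derivative.eval y ≠ 0 := by
    rw [← norm_ne_zero_iff, heq, norm_ne_zero_iff]; exact hx
  refine ⟨hy, le_antisymm hle ?_⟩
  have h' : sgamma f y * ‖y - x‖ < 1 := by
    rw [norm_sub_rev]
    exact lt_of_le_of_lt (mul_le_mul_of_nonneg_right hle (norm_nonneg _)) h
  exact (step f y x hy h').2
end

section
/- Let f ∈ F[X] and x ∈ F with f'(x) ≠ 0, and set β(f,x) := |f(x)/f'(x)|. If γ(f,x)·|x - y| < 1, then β(f,y) ≤ max(β(f,x), |y - x|); moreover if |y - x| < β(f,x) then β(f,y) = β(f,x). -/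
open Polynomial Filter

/-- If `γ(f,x)·|x-y| < 1` then `β(f,y) ≤ max(β(f,x), |y-x|)`, with equality
`β(f,y) = β(f,x)` when `|y-x| < β(f,x)`. -/
theorem ultrametric_beta_variation
    {F : Type*} [NormedField F] [IsUltrametricDist F] [CompleteSpace F] [CharZero F]
    (f : F[X]) (x y : F) (hx : f.derivative.eval x ≠ 0)
    (h : sgamma f x * ‖x - y‖ < 1) :
    sbeta f y ≤ max (sbeta f x) ‖y - x‖ ∧
      (‖y - x‖ < sbeta f x → sbeta f y = sbeta f x) := by
  classical
  set e := y - x with he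
  set t := ‖e‖ with ht
  set A := ‖f.derivative.eval x‖ with hA'
  have hA : 0 < A := norm_pos_iff.mpr hx
  set d := f.natDegree with hd
  set γ := sgamma f x with hγ'
  set g : ℕ → ℝ := fun k =>
    ‖((⇑(derivative (R := F)))^[k + 2] f).eval x /
        (((k + 2).factorial : F) * f.derivative.eval x)‖ ^ ((1 : ℝ) / (k + 1)) with hg'
  have hγdef : γ = ⨆ k, g k := rfl
  have hgnn : ∀ k, 0 ≤ g k := fun k => Real.rpow_nonneg (norm_nonneg _) _
  have hgz : ∀ k, d < k → g k = 0 := by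
    intro k hk
    have hz : (⇑(derivative (R := F)))^[k + 2] f = 0 :=
      iterate_derivative_eq_zero (by omega)
    simp only [hg', hz, eval_zero, zero_div, norm_zero]
    exact Real.zero_rpow (by positivity)
  have hbdd : BddAbove (Set.range g) := by
    apply Set.Finite.bddAbove
    apply Set.Finite.subset (((Set.finite_Iic d).image g).insert 0)
    rintro _ ⟨k, rfl⟩
    rcases le_or_gt k d with hk | hk
    · exact Set.mem_insert_of_mem _ ⟨k, hk, rfl⟩
    · rw [hgz k hk]; exact Set.mem_insert _ _
  have hγ_le : ∀ k, g k ≤ γ := fun k => le_ciSup hbdd k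
  have hγ0 : 0 ≤ γ := le_trans (hgnn 0) (hγ_le 0)
  have hsmall : γ * t < 1 := by rw [ht, he, norm_sub_rev]; exact h
  have ht0 : 0 ≤ t := norm_nonneg _
  have hγt : 0 ≤ γ * t := mul_nonneg hγ0 ht0
  set c : ℕ → F := fun k => (hasseDeriv k f).eval x with hc'
  have hc0 : c 0 = f.eval x := by simp [hc', hasseDeriv_zero]
  have hc1 : c 1 = f.derivative.eval x := by simp [hc', hasseDeriv_one]
  -- bound on higher hasse derivatives
  have hc : ∀ k : ℕ, ‖c (k + 2)‖ ≤ A * γ ^ (k + 1) := by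
    intro k
    have hfac : ((k + 2).factorial : F) ≠ 0 :=
      Nat.cast_ne_zero.mpr (Nat.factorial_ne_zero _)
    have h1 : (⇑(derivative (R := F)))^[k + 2] f = (k + 2).factorial • hasseDeriv (k + 2) f := by
      rw [← factorial_smul_hasseDeriv]
      simp
    have h2 : g k = (‖c (k + 2)‖ / A) ^ ((1 : ℝ) / (k + 1)) := by
      simp only [hg']
      rw [h1, nsmul_eq_mul, eval_mul, eval_natCast, mul_div_mul_left _ _ hfac, norm_div]
    have hle : (‖c (k + 2)‖ / A) ^ ((1 : ℝ) / (k + 1)) ≤ γ := h2 ▸ hγ_le k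
    set u : ℝ := ‖c (k + 2)‖ / A with hu'
    have hu : 0 ≤ u := div_nonneg (norm_nonneg _) hA.le
    have h4 := pow_le_pow_left₀ (Real.rpow_nonneg hu _) hle (k + 1)
    rw [← Real.rpow_natCast (u ^ ((1 : ℝ) / (k + 1))) (k + 1), ← Real.rpow_mul hu] at h4
    have hx1 : ((1 : ℝ) / (k + 1)) * ((k + 1 : ℕ) : ℝ) = 1 := by
      push_cast
      field_simp
    rw [hx1, Real.rpow_one] at h4
    calc ‖c (k + 2)‖ = u * A := by rw [hu']; field_simp
    _ ≤ γ ^ (k + 1) * A := by gcongr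
    _ = A * γ ^ (k + 1) := mul_comm _ _
  -- Taylor expansion of f at x
  have hfy : f.eval y = c 0 + ∑ i ∈ Finset.range d, c (i + 1) * e ^ (i + 1) := by
    conv_lhs => rw [← taylor_eval_sub x f y]
    rw [Polynomial.eval_eq_sum_range' (p := taylor x f) (n := d + 1)
      (by rw [natDegree_taylor]; omega), Finset.sum_range_succ']
    simp only [taylor_coeff, hc', pow_zero, mul_one]
    rw [add_comm]
  -- Taylor expansion of f' at x
  have hfy' : f.derivative.eval y = f.derivative.eval x +
      ∑ i ∈ Finset.range d, (hasseDeriv (i + 1) f.derivative).eval x * e ^ (i + 1) := by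
    conv_lhs => rw [← taylor_eval_sub x f.derivative y]
    rw [Polynomial.eval_eq_sum_range' (p := taylor x f.derivative) (n := d + 1)
      (by rw [natDegree_taylor]; have := natDegree_derivative_le f; omega),
      Finset.sum_range_succ']
    simp only [taylor_coeff, pow_zero, mul_one, hasseDeriv_zero, LinearMap.id_coe, id_eq]
    rw [add_comm]
  -- relation between hasse derivatives of f' and f
  have hb : ∀ i : ℕ, ‖(hasseDeriv (i + 1) f.derivative).eval x‖ ≤ ‖c (i + 2)‖ := by
    intro i
    have h1 := LinearMap.congr_fun (hasseDeriv_comp (R := F) (i + 1) 1) f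
    simp only [LinearMap.comp_apply, hasseDeriv_one, LinearMap.smul_apply] at h1
    rw [h1, Nat.choose_succ_self_right, nsmul_eq_mul, eval_mul, eval_natCast, norm_mul]
    exact mul_le_of_le_one_left (norm_nonneg _) (IsUltrametricDist.norm_natCast_le_one F _)
  -- uniform bound on the tail of f's Taylor expansion
  have termbound1 : ∀ i : ℕ, ‖c (i + 1) * e ^ (i + 1)‖ ≤ A * t := by
    intro i
    rw [norm_mul, norm_pow]
    cases i with
    | zero => simp [hc1, ← hA', ← ht]
    | succ j =>
      calc ‖c (j + 2)‖ * t ^ (j + 2) ≤ (A * γ ^ (j + 1)) * t ^ (j + 2) := by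
            gcongr; exact hc j
        _ = (A * t) * (γ * t) ^ (j + 1) := by ring
        _ ≤ (A * t) * 1 :=
            mul_le_mul_of_nonneg_left (pow_le_one₀ hγt hsmall.le) (by positivity)
        _ = A * t := mul_one _
  have hS : ‖∑ i ∈ Finset.range d, c (i + 1) * e ^ (i + 1)‖ ≤ A * t :=
    IsUltrametricDist.norm_sum_le_of_forall_le_of_nonneg (by positivity)
      (fun i _ => termbound1 i)
  -- bound for the tail of f''s Taylor expansion
  have termbound2 : ∀ i : ℕ,
      ‖(hasseDeriv (i + 1) f.derivative).eval x * e ^ (i + 1)‖ ≤ A * (γ * t) := by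
    intro i
    rw [norm_mul, norm_pow]
    calc ‖(hasseDeriv (i + 1) f.derivative).eval x‖ * t ^ (i + 1)
        ≤ ‖c (i + 2)‖ * t ^ (i + 1) := by gcongr; exact hb i
      _ ≤ (A * γ ^ (i + 1)) * t ^ (i + 1) := by gcongr; exact hc i
      _ = A * (γ * t) ^ (i + 1) := by ring
      _ ≤ A * (γ * t) := by
          have : (γ * t) ^ (i + 1) ≤ (γ * t) ^ 1 :=
            pow_le_pow_of_le_one hγt hsmall.le (by omega)
          rw [pow_one] at this
          exact mul_le_mul_of_nonneg_left this hA.le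
  have hS' : ‖∑ i ∈ Finset.range d,
      (hasseDeriv (i + 1) f.derivative).eval x * e ^ (i + 1)‖ < A := by
    refine lt_of_le_of_lt (IsUltrametricDist.norm_sum_le_of_forall_le_of_nonneg
      (by positivity) (fun i _ => termbound2 i)) ?_
    nlinarith
  -- the derivative has the same norm at y
  have hAy : ‖f.derivative.eval y‖ = A := by
    rw [hfy', IsUltrametricDist.norm_add_eq_max_of_norm_ne_norm (by exact hS'.ne'),
      max_eq_left hS'.le]
  have hbetay : sbeta f y = ‖f.eval y‖ / A := by rw [sbeta, norm_div, hAy]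
  have hbetax : sbeta f x = ‖f.eval x‖ / A := by rw [sbeta, norm_div]
  constructor
  · have h1 : ‖f.eval y‖ ≤ max ‖f.eval x‖ (A * t) := by
      rw [hfy]
      refine le_trans (IsUltrametricDist.norm_add_le_max _ _) ?_
      rw [hc0]
      exact max_le_max le_rfl hS
    rw [hbetay, hbetax]
    calc ‖f.eval y‖ / A ≤ max ‖f.eval x‖ (A * t) / A := by gcongr
      _ = max (‖f.eval x‖ / A) t := by
          rw [← max_div_div_right hA.le, mul_div_cancel_left₀ _ (ne_of_gt hA)]
  · intro hlt
    rw [hbetax] at hlt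
    have hAt : A * t < ‖f.eval x‖ := by
      rw [lt_div_iff₀ hA] at hlt
      linarith [hlt]
    have hSlt : ‖∑ i ∈ Finset.range d, c (i + 1) * e ^ (i + 1)‖ < ‖f.eval x‖ :=
      lt_of_le_of_lt hS hAt
    have hfyn : ‖f.eval y‖ = ‖f.eval x‖ := by
      rw [hfy, hc0, IsUltrametricDist.norm_add_eq_max_of_norm_ne_norm (by exact hSlt.ne'),
        max_eq_left hSlt.le]
    rw [hbetay, hbetax, hfyn]
end

section
/- Let f ∈ F[X] and x ∈ F with f'(x) ≠ 0. If there exists a root ζ of f with γ(f,x)·|x - ζ| < 1, then β(f,x) = |x - ζ| and hence α(f,x) < 1. Conversely, if α(f,x) < 1 then there is a root ζ of f with γ(f,x)·|x - ζ| < 1. (Equivalence of the α-condition and the γ-condition.) -/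
open Polynomial Filter

set_option linter.unusedSectionVars false

section
variable {F : Type*} [NormedField F] [CharZero F]

lemma sgamma_eq (f : F[X]) (x : F) :
    sgamma f x = ⨆ k : ℕ,
      ‖(hasseDeriv (k + 2) f).eval x / f.derivative.eval x‖ ^ ((1 : ℝ) / (k + 1)) := by
  unfold sgamma
  congr 1; funext k
  congr 2
  have h := congrFun (Polynomial.factorial_smul_hasseDeriv (R := F) (k + 2)) f
  simp only [LinearMap.smul_apply] at h
  rw [← h]
  have hf : ((k + 2).factorial : F) ≠ 0 := Nat.cast_ne_zero.mpr (Nat.factorial_ne_zero _)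
  rw [eval_smul, nsmul_eq_mul]
  rw [mul_div_mul_left _ _ hf]

end

section
variable {F : Type*} [NormedField F] [CharZero F]

lemma bdd_range (f : F[X]) (x : F) :
    BddAbove (Set.range fun k : ℕ =>
      ‖(hasseDeriv (k + 2) f).eval x / f.derivative.eval x‖ ^ ((1 : ℝ) / (k + 1))) := by
  apply Set.Finite.bddAbove
  apply Set.Finite.subset (Set.Finite.insert 0 ((Set.finite_Iio f.natDegree).image
    (fun k : ℕ => ‖(hasseDeriv (k + 2) f).eval x / f.derivative.eval x‖ ^ ((1 : ℝ) / (k + 1)))))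
  rintro _ ⟨k, rfl⟩
  by_cases hk : k < f.natDegree
  · exact Or.inr ⟨k, hk, rfl⟩
  · left
    simp only [hasseDeriv_eq_zero_of_lt_natDegree f (k + 2) (by omega), eval_zero, zero_div,
      norm_zero]
    exact Real.zero_rpow (by positivity)

lemma hasse_key (f : F[X]) (x : F) (hx : f.derivative.eval x ≠ 0) (k : ℕ) :
    ‖(hasseDeriv (k + 2) f).eval x‖ ≤ ‖f.derivative.eval x‖ * sgamma f x ^ (k + 1) := by
  have h1 : ‖(hasseDeriv (k + 2) f).eval x / f.derivative.eval x‖ ^ ((1 : ℝ) / (k + 1))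
      ≤ sgamma f x := by
    rw [sgamma_eq]
    exact le_ciSup (bdd_range f x) k
  have h2 : ‖(hasseDeriv (k + 2) f).eval x / f.derivative.eval x‖ ≤ sgamma f x ^ (k + 1) := by
    have := Real.rpow_le_rpow (Real.rpow_nonneg (norm_nonneg _) _) h1 (by positivity : (0:ℝ) ≤ (k+1:ℝ))
    rw [← Real.rpow_mul (norm_nonneg _), one_div,
      inv_mul_cancel₀ (by positivity : ((k:ℝ)+1) ≠ 0), Real.rpow_one] at this
    rw [← Real.rpow_natCast (sgamma f x) (k+1)]
    push_cast
    exact this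
  have hpos : (0:ℝ) < ‖f.derivative.eval x‖ := norm_pos_iff.mpr hx
  rw [norm_div, div_le_iff₀ hpos] at h2
  rw [mul_comm]
  exact h2

end

section
variable {F : Type*} [NormedField F] [CharZero F]

lemma taylor_expand (f : F[X]) (y z : F) :
    f.eval z = ∑ k ∈ Finset.range (f.natDegree + 1), (hasseDeriv k f).eval y * (z - y) ^ k := by
  conv_lhs => rw [← taylor_eval_sub y f z]
  rw [eval_eq_sum_range' (n := f.natDegree + 1) (by rw [natDegree_taylor]; omega)]
  simp [taylor_coeff]

lemma hasse_hasse (j i : ℕ) (f : F[X]) :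
    hasseDeriv i (hasseDeriv j f) = (i + j).choose i • hasseDeriv (i + j) f := by
  have := congrFun (congrArg DFunLike.coe (hasseDeriv_comp (R := F) i j)) f
  simpa using this

lemma natDegree_pos (f : F[X]) (x : F) (hx : f.derivative.eval x ≠ 0) : 1 ≤ f.natDegree := by
  by_contra h
  push_neg at h
  interval_cases hN : f.natDegree
  · rw [eq_C_of_natDegree_eq_zero hN] at hx
    simp at hx

end

section
variable {F : Type*} [NormedField F] [IsUltrametricDist F] [CharZero F]

/-- bound on shifted hasse derivatives at a nearby point -/
lemma hasse_key_near (f : F[X]) (x : F) (hx : f.derivative.eval x ≠ 0) (y : F)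
    (hy : sgamma f x * ‖y - x‖ < 1) (j : ℕ) :
    ‖(hasseDeriv (j + 2) f).eval y‖ ≤ ‖f.derivative.eval x‖ * sgamma f x ^ (j + 1) := by
  have hg := sgamma_nonneg f x
  have hgy : 0 ≤ sgamma f x * ‖y - x‖ := by positivity
  rw [taylor_expand (hasseDeriv (j + 2) f) x y]
  apply IsUltrametricDist.norm_sum_le_of_forall_le_of_nonneg (by positivity)
  intro i _
  rw [hasse_hasse, eval_smul, nsmul_eq_mul, norm_mul, norm_mul, norm_pow]
  have h2 : ‖(hasseDeriv (i + (j + 2)) f).eval x‖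
      ≤ ‖f.derivative.eval x‖ * sgamma f x ^ (i + j + 1) := by
    have hc : i + (j + 2) = (i + j) + 2 := by omega
    rw [hc]; exact hasse_key f x hx (i + j)
  calc ‖((i + (j+2)).choose i : F)‖ * ‖(hasseDeriv (i + (j + 2)) f).eval x‖ * ‖y - x‖ ^ i
      ≤ 1 * (‖f.derivative.eval x‖ * sgamma f x ^ (i + j + 1)) * ‖y - x‖ ^ i := by
        apply mul_le_mul _ le_rfl (by positivity) (by positivity)
        exact mul_le_mul (IsUltrametricDist.norm_natCast_le_one F _) h2 (norm_nonneg _) zero_le_one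
    _ = (‖f.derivative.eval x‖ * sgamma f x ^ (j + 1)) * (sgamma f x * ‖y - x‖) ^ i := by
        rw [mul_pow]; ring
    _ ≤ (‖f.derivative.eval x‖ * sgamma f x ^ (j + 1)) * 1 :=
        mul_le_mul_of_nonneg_left (pow_le_one₀ hgy hy.le) (by positivity)
    _ = ‖f.derivative.eval x‖ * sgamma f x ^ (j + 1) := mul_one _

end

section
variable {F : Type*} [NormedField F] [IsUltrametricDist F] [CharZero F]

lemma hasse_of_deriv (f : F[X]) (k : ℕ) :
    hasseDeriv k (derivative f) = (k + 1).choose k • hasseDeriv (k + 1) f := by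
  rw [← hasseDeriv_one' f, hasse_hasse 1 k]

lemma norm_eval_eq_of_dominant (p : F[X]) (x y : F) (C : ℝ) (hC0 : 0 ≤ C)
    (h0 : ∀ k, 1 ≤ k → ‖(hasseDeriv k p).eval x * (y - x) ^ k‖ ≤ C)
    (hC : C < ‖p.eval x‖) : ‖p.eval y‖ = ‖p.eval x‖ := by
  rw [taylor_expand p x y, Finset.sum_range_succ']
  have ht0 : (hasseDeriv 0 p).eval x * (y - x) ^ 0 = p.eval x := by
    simp [hasseDeriv_zero']
  rw [ht0]
  have hrest : ‖∑ i ∈ Finset.range p.natDegree,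
      (hasseDeriv (i + 1) p).eval x * (y - x) ^ (i + 1)‖ ≤ C :=
    IsUltrametricDist.norm_sum_le_of_forall_le_of_nonneg hC0
      (fun i _ => h0 (i + 1) (by omega))
  have hlt : ‖∑ i ∈ Finset.range p.natDegree,
      (hasseDeriv (i + 1) p).eval x * (y - x) ^ (i + 1)‖ < ‖p.eval x‖ := lt_of_le_of_lt hrest hC
  rw [IsUltrametricDist.norm_add_eq_max_of_norm_ne_norm (ne_of_lt hlt), max_eq_right hlt.le]

lemma deriv_norm_near (f : F[X]) (x : F) (hx : f.derivative.eval x ≠ 0) (y : F)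
    (hy : sgamma f x * ‖y - x‖ < 1) :
    ‖f.derivative.eval y‖ = ‖f.derivative.eval x‖ := by
  have hg := sgamma_nonneg f x
  have hE : 0 < ‖f.derivative.eval x‖ := norm_pos_iff.mpr hx
  have hgy : 0 ≤ sgamma f x * ‖y - x‖ := by positivity
  apply norm_eval_eq_of_dominant f.derivative x y (‖f.derivative.eval x‖ * (sgamma f x * ‖y - x‖))
    (by positivity)
  · intro k hk
    obtain ⟨j, rfl⟩ : ∃ j, k = j + 1 := ⟨k - 1, by omega⟩
    rw [hasse_of_deriv, eval_smul, nsmul_eq_mul, norm_mul, norm_mul, norm_pow]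
    calc ‖((j + 1 + 1).choose (j + 1) : F)‖ * ‖(hasseDeriv (j + 1 + 1) f).eval x‖ * ‖y - x‖ ^ (j + 1)
        ≤ 1 * (‖f.derivative.eval x‖ * sgamma f x ^ (j + 1)) * ‖y - x‖ ^ (j + 1) := by
          apply mul_le_mul _ le_rfl (by positivity) (by positivity)
          exact mul_le_mul (IsUltrametricDist.norm_natCast_le_one F _) (hasse_key f x hx j)
            (norm_nonneg _) zero_le_one
      _ = ‖f.derivative.eval x‖ * (sgamma f x * ‖y - x‖) ^ (j + 1) := by rw [mul_pow]; ring
      _ ≤ ‖f.derivative.eval x‖ * (sgamma f x * ‖y - x‖) :=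
          mul_le_mul_of_nonneg_left (pow_le_of_le_one hgy hy.le (by omega)) hE.le
  · calc ‖f.derivative.eval x‖ * (sgamma f x * ‖y - x‖) < ‖f.derivative.eval x‖ * 1 :=
          (mul_lt_mul_iff_right₀ hE).mpr hy
      _ = ‖f.derivative.eval x‖ := mul_one _

end

section
variable {F : Type*} [NormedField F] [IsUltrametricDist F] [CharZero F]

lemma sbeta_eq_dist_root (f : F[X]) (x : F) (hx : f.derivative.eval x ≠ 0) (ζ : F)
    (hζ : f.eval ζ = 0) (hlt : sgamma f x * ‖x - ζ‖ < 1) : sbeta f x = ‖x - ζ‖ := by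
  by_cases hzx : ζ = x
  · subst hzx
    simp [sbeta, hζ]
  have hg := sgamma_nonneg f x
  have hE : 0 < ‖f.derivative.eval x‖ := norm_pos_iff.mpr hx
  have hd : 0 < ‖x - ζ‖ := by
    rw [norm_pos_iff, sub_ne_zero]; exact fun h => hzx h.symm
  have hgd : 0 ≤ sgamma f x * ‖x - ζ‖ := by positivity
  obtain ⟨M, hM⟩ : ∃ M, f.natDegree = M + 1 :=
    ⟨f.natDegree - 1, by have := natDegree_pos f x hx; omega⟩
  have h := taylor_expand f x ζ
  rw [hζ, hM, Finset.sum_range_succ', Finset.sum_range_succ'] at h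
  set R : F := ∑ i ∈ Finset.range M,
      (hasseDeriv (i + 1 + 1) f).eval x * (ζ - x) ^ (i + 1 + 1) with hR
  have hsub : ‖ζ - x‖ = ‖x - ζ‖ := norm_sub_rev _ _
  have hRle : ‖R‖ ≤ (‖f.derivative.eval x‖ * ‖x - ζ‖) * (sgamma f x * ‖x - ζ‖) := by
    apply IsUltrametricDist.norm_sum_le_of_forall_le_of_nonneg (by positivity)
    intro i _
    rw [norm_mul, norm_pow, hsub]
    calc ‖(hasseDeriv (i + 1 + 1) f).eval x‖ * ‖x - ζ‖ ^ (i + 1 + 1)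
        ≤ (‖f.derivative.eval x‖ * sgamma f x ^ (i + 1)) * ‖x - ζ‖ ^ (i + 1 + 1) :=
          mul_le_mul_of_nonneg_right (by
            have := hasse_key f x hx i
            convert this using 3) (by positivity)
      _ = (‖f.derivative.eval x‖ * ‖x - ζ‖) * ((sgamma f x * ‖x - ζ‖) * (sgamma f x * ‖x - ζ‖) ^ i) := by
          rw [mul_pow]; ring
      _ ≤ (‖f.derivative.eval x‖ * ‖x - ζ‖) * ((sgamma f x * ‖x - ζ‖) * 1) := by
          apply mul_le_mul_of_nonneg_left _ (by positivity)
          exact mul_le_mul_of_nonneg_left (pow_le_one₀ hgd hlt.le) hgd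
      _ = (‖f.derivative.eval x‖ * ‖x - ζ‖) * (sgamma f x * ‖x - ζ‖) := by ring
  have hRlt : ‖R‖ < ‖f.derivative.eval x‖ * ‖x - ζ‖ := by
    refine lt_of_le_of_lt hRle ?_
    calc (‖f.derivative.eval x‖ * ‖x - ζ‖) * (sgamma f x * ‖x - ζ‖)
        < (‖f.derivative.eval x‖ * ‖x - ζ‖) * 1 := by
          exact (mul_lt_mul_iff_right₀ (by positivity)).mpr hlt
      _ = _ := mul_one _
  simp only [hasseDeriv_zero', pow_zero, mul_one] at h
  have hfx : f.eval x = -((hasseDeriv (0 + 1) f).eval x * (ζ - x) ^ (0 + 1)) + -R := by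
    rw [hR]; linear_combination -h
  have ht1 : ‖-((hasseDeriv (0 + 1) f).eval x * (ζ - x) ^ (0 + 1))‖
      = ‖f.derivative.eval x‖ * ‖x - ζ‖ := by
    rw [norm_neg, norm_mul, norm_pow]
    norm_num [hasseDeriv_one', hsub]
  have hne : ‖-((hasseDeriv (0 + 1) f).eval x * (ζ - x) ^ (0 + 1))‖ ≠ ‖-R‖ := by
    rw [ht1, norm_neg]; exact (ne_of_lt hRlt).symm
  have hval : ‖f.eval x‖ = ‖f.derivative.eval x‖ * ‖x - ζ‖ := by
    rw [hfx, IsUltrametricDist.norm_add_eq_max_of_norm_ne_norm hne, ht1, norm_neg,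
      max_eq_left hRlt.le]
  rw [sbeta, norm_div, hval, mul_comm, mul_div_assoc, div_self hE.ne', mul_one]

end

section
variable {F : Type*} [NormedField F] [IsUltrametricDist F] [CharZero F]

lemma newton_step (f : F[X]) (x : F) (hx : f.derivative.eval x ≠ 0) (hα : salpha f x < 1)
    (y : F) (hy1 : ‖y - x‖ ≤ sbeta f x)
    (hB : ‖f.eval y / f.derivative.eval y‖ ≤ sbeta f x) :
    ‖f.eval y / f.derivative.eval y‖ * ‖f.derivative.eval x‖ = ‖f.eval y‖ ∧
      ‖f.eval (newton f y)‖ ≤ ‖f.derivative.eval x‖ * sgamma f x *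
        ‖f.eval y / f.derivative.eval y‖ ^ 2 := by
  have hg := sgamma_nonneg f x
  have hE : 0 < ‖f.derivative.eval x‖ := norm_pos_iff.mpr hx
  have hgy : sgamma f x * ‖y - x‖ < 1 :=
    lt_of_le_of_lt (le_of_le_of_eq (mul_le_mul_of_nonneg_left hy1 hg)
      (mul_comm _ _)) hα
  have hEy := deriv_norm_near f x hx y hgy
  have hfy : f.derivative.eval y ≠ 0 := by
    intro h
    rw [h, norm_zero] at hEy
    exact hE.ne' hEy.symm
  constructor
  · rw [norm_div, hEy, div_mul_cancel₀ _ hE.ne']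
  set B := ‖f.eval y / f.derivative.eval y‖ with hBdef
  have hB0 : 0 ≤ B := norm_nonneg _
  have hgB : sgamma f x * B < 1 :=
    lt_of_le_of_lt (le_of_le_of_eq (mul_le_mul_of_nonneg_left hB hg) (mul_comm _ _)) hα
  have hz : newton f y - y = -(f.eval y / f.derivative.eval y) := by unfold newton; ring
  obtain ⟨M, hM⟩ : ∃ M, f.natDegree = M + 1 :=
    ⟨f.natDegree - 1, by have := natDegree_pos f x hx; omega⟩
  rw [taylor_expand f y (newton f y), hM, Finset.sum_range_succ', Finset.sum_range_succ']
  have hcancel : (hasseDeriv (0 + 1) f).eval y * (newton f y - y) ^ (0 + 1)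
      + (hasseDeriv 0 f).eval y * (newton f y - y) ^ 0 = 0 := by
    rw [hasseDeriv_one', hasseDeriv_zero', hz, pow_zero, pow_one, mul_one, mul_neg,
      mul_div_cancel₀ _ hfy, neg_add_cancel]
  rw [add_assoc, hcancel, add_zero]
  apply IsUltrametricDist.norm_sum_le_of_forall_le_of_nonneg (by positivity)
  intro i _
  rw [norm_mul, norm_pow, hz, norm_neg, ← hBdef]
  calc ‖(hasseDeriv (i + 1 + 1) f).eval y‖ * B ^ (i + 1 + 1)
      ≤ (‖f.derivative.eval x‖ * sgamma f x ^ (i + 1)) * B ^ (i + 1 + 1) := by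
        apply mul_le_mul_of_nonneg_right _ (by positivity)
        have := hasse_key_near f x hx y hgy i
        convert this using 3
    _ = (‖f.derivative.eval x‖ * sgamma f x * B ^ 2) * (sgamma f x * B) ^ i := by
        rw [mul_pow]; ring
    _ ≤ (‖f.derivative.eval x‖ * sgamma f x * B ^ 2) * 1 :=
        mul_le_mul_of_nonneg_left (pow_le_one₀ (by positivity) hgB.le) (by positivity)
    _ = ‖f.derivative.eval x‖ * sgamma f x * B ^ 2 := mul_one _

end

section
variable {F : Type*} [NormedField F] [IsUltrametricDist F] [CharZero F]

lemma salpha_def (f : F[X]) (x : F) : salpha f x = sbeta f x * sgamma f x := rfl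

lemma newton_converges (f : F[X]) (x : F) (hx : f.derivative.eval x ≠ 0)
    [CompleteSpace F] (hα : salpha f x < 1) :
    ∃ ζ : F, f.eval ζ = 0 ∧ ‖x - ζ‖ ≤ sbeta f x := by
  have hg := sgamma_nonneg f x
  have hb0 : (0:ℝ) ≤ sbeta f x := norm_nonneg _
  have hα0 : (0:ℝ) ≤ salpha f x := mul_nonneg hb0 hg
  have hE : 0 < ‖f.derivative.eval x‖ := norm_pos_iff.mpr hx
  set u : ℕ → F := fun n => (newton f)^[n] x with hu
  have hus : ∀ n, u (n + 1) = newton f (u n) := fun n => Function.iterate_succ_apply' _ _ _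
  have hnz : ∀ y : F, newton f y - y = -(f.eval y / f.derivative.eval y) := fun y => by
    unfold newton; ring
  have inv : ∀ n, ‖u n - x‖ ≤ sbeta f x ∧
      ‖f.eval (u n) / f.derivative.eval (u n)‖ ≤ sbeta f x * salpha f x ^ n := by
    intro n
    induction n with
    | zero =>
      refine ⟨by simpa [hu] using hb0, ?_⟩
      simp only [hu, Function.iterate_zero, id_eq, pow_zero, mul_one, sbeta]
      exact le_refl _
    | succ n ih =>
      obtain ⟨ih1, ih2⟩ := ih
      have hαn : salpha f x ^ n ≤ 1 := pow_le_one₀ hα0 hα.le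
      have hB : ‖f.eval (u n) / f.derivative.eval (u n)‖ ≤ sbeta f x :=
        le_trans ih2 (by nlinarith)
      obtain ⟨h1, h2⟩ := newton_step f x hx hα (u n) ih1 hB
      have hdist : ‖u (n + 1) - u n‖ = ‖f.eval (u n) / f.derivative.eval (u n)‖ := by
        rw [hus, hnz, norm_neg]
      have key1 : ‖u (n + 1) - x‖ ≤ sbeta f x := by
        calc ‖u (n + 1) - x‖ = ‖(u (n + 1) - u n) + (u n - x)‖ := by congr 1; ring
          _ ≤ max ‖u (n + 1) - u n‖ ‖u n - x‖ := IsUltrametricDist.norm_add_le_max _ _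
          _ ≤ sbeta f x := max_le (hdist ▸ hB) ih1
      refine ⟨key1, ?_⟩
      have hgy1 : sgamma f x * ‖u (n + 1) - x‖ < 1 :=
        lt_of_le_of_lt (le_of_le_of_eq (mul_le_mul_of_nonneg_left key1 hg) (mul_comm _ _)) hα
      have hE1 := deriv_norm_near f x hx (u (n + 1)) hgy1
      rw [norm_div, hE1, div_le_iff₀ hE]
      calc ‖f.eval (u (n + 1))‖
          ≤ ‖f.derivative.eval x‖ * sgamma f x *
            ‖f.eval (u n) / f.derivative.eval (u n)‖ ^ 2 := by rw [hus]; exact h2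
        _ ≤ ‖f.derivative.eval x‖ * sgamma f x * (sbeta f x * salpha f x ^ n) ^ 2 := by
            apply mul_le_mul_of_nonneg_left _ (by positivity)
            exact pow_le_pow_left₀ (norm_nonneg _) ih2 2
        _ = sbeta f x * salpha f x ^ (2 * n + 1) * ‖f.derivative.eval x‖ := by
            rw [salpha_def]; ring
        _ ≤ sbeta f x * salpha f x ^ (n + 1) * ‖f.derivative.eval x‖ := by
            apply mul_le_mul_of_nonneg_right _ hE.le
            exact mul_le_mul_of_nonneg_left
              (pow_le_pow_of_le_one hα0 hα.le (by omega)) hb0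
  have hcauchy : CauchySeq u := by
    apply cauchySeq_of_le_geometric (salpha f x) (sbeta f x) hα
    intro n
    rw [dist_eq_norm, norm_sub_rev, hus, hnz, norm_neg]
    exact (inv n).2
  obtain ⟨ζ, hζ⟩ := cauchySeq_tendsto_of_complete hcauchy
  have heval : ∀ n, ‖f.eval (u n)‖ ≤ (sbeta f x * ‖f.derivative.eval x‖) * salpha f x ^ n := by
    intro n
    have hgy : sgamma f x * ‖u n - x‖ < 1 :=
      lt_of_le_of_lt (le_of_le_of_eq (mul_le_mul_of_nonneg_left (inv n).1 hg) (mul_comm _ _)) hα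
    have hEn := deriv_norm_near f x hx (u n) hgy
    have hfn : f.derivative.eval (u n) ≠ 0 := by
      intro h; rw [h, norm_zero] at hEn; exact hE.ne' hEn.symm
    have : ‖f.eval (u n)‖ = ‖f.eval (u n) / f.derivative.eval (u n)‖ * ‖f.derivative.eval x‖ := by
      rw [norm_div, hEn, div_mul_cancel₀ _ hE.ne']
    rw [this]
    calc ‖f.eval (u n) / f.derivative.eval (u n)‖ * ‖f.derivative.eval x‖
        ≤ (sbeta f x * salpha f x ^ n) * ‖f.derivative.eval x‖ :=
          mul_le_mul_of_nonneg_right (inv n).2 hE.le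
      _ = (sbeta f x * ‖f.derivative.eval x‖) * salpha f x ^ n := by ring
  have htend0 : Tendsto (fun n => f.eval (u n)) atTop (nhds 0) := by
    apply squeeze_zero_norm heval
    simpa using (tendsto_pow_atTop_nhds_zero_of_lt_one hα0 hα).const_mul
      (sbeta f x * ‖f.derivative.eval x‖)
  have htend : Tendsto (fun n => f.eval (u n)) atTop (nhds (f.eval ζ)) :=
    ((f.continuous_aeval).tendsto ζ).comp hζ
  refine ⟨ζ, tendsto_nhds_unique htend htend0, ?_⟩
  have hmem : ∀ n, u n ∈ Metric.closedBall x (sbeta f x) := fun n => by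
    rw [Metric.mem_closedBall, dist_eq_norm]; exact (inv n).1
  have := (Metric.isClosed_closedBall).mem_of_tendsto hζ (Filter.Eventually.of_forall hmem)
  rwa [Metric.mem_closedBall, dist_comm, dist_eq_norm] at this

end

/-- Equivalence of the α-condition and the γ-condition. -/
theorem ultrametric_alpha_gamma_equivalence
    {F : Type*} [NormedField F] [IsUltrametricDist F] [CompleteSpace F] [CharZero F]
    (f : F[X]) (x : F) (hx : f.derivative.eval x ≠ 0) :
    (∀ ζ : F, f.eval ζ = 0 → sgamma f x * ‖x - ζ‖ < 1 →
        sbeta f x = ‖x - ζ‖ ∧ salpha f x < 1) ∧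
      (salpha f x < 1 → ∃ ζ : F, f.eval ζ = 0 ∧ sgamma f x * ‖x - ζ‖ < 1) := by
  constructor
  · intro ζ hζ hlt
    have hb := sbeta_eq_dist_root f x hx ζ hζ hlt
    refine ⟨hb, ?_⟩
    rw [salpha_def, hb, mul_comm]
    exact hlt
  · intro hα
    obtain ⟨ζ, h0, hle⟩ := newton_converges f x hx hα
    refine ⟨ζ, h0, ?_⟩
    calc sgamma f x * ‖x - ζ‖ ≤ sgamma f x * sbeta f x :=
        mul_le_mul_of_nonneg_left hle (sgamma_nonneg f x)
      _ = salpha f x := by rw [salpha_def, mul_comm]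
      _ < 1 := hα
end

section
/- Ultrametric separation theorem for γ: let f ∈ F[X] and let ζ be a simple root of f in a fixed algebraic closure of F (with the extended absolute value). Then 1/γ(f,ζ) equals the minimum distance from ζ to the other roots of f: 1/γ(f,ζ) = min{ |ζ - η| : η a root of f, η ≠ ζ } (interpreted as +∞ if ζ is the only root). -/
open Polynomial Filter

set_option linter.unusedSectionVars false
set_option maxHeartbeats 1000000


section Aux
variable {K : Type*} [NormedField K] [IsUltrametricDist K]

lemma my_norm_add_le_max (a b : K) : ‖a + b‖ ≤ max ‖a‖ ‖b‖ :=
  IsUltrametricDist.norm_add_le_max a b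

lemma my_norm_sub_le_max (a b : K) : ‖a - b‖ ≤ max ‖a‖ ‖b‖ := by
  rw [sub_eq_add_neg]
  simpa using IsUltrametricDist.norm_add_le_max a (-b)

lemma my_norm_add_eq (a b : K) (h : ‖b‖ < ‖a‖) : ‖a + b‖ = ‖a‖ := by
  rw [IsUltrametricDist.norm_add_eq_max_of_norm_ne_norm (by exact h.ne'), max_eq_left h.le]

lemma norm_finset_sum_lt {ι : Type*} {s : Finset ι} {f : ι → K} {c : ℝ} (hc : 0 < c)
    (h : ∀ i ∈ s, ‖f i‖ < c) : ‖∑ i ∈ s, f i‖ < c := by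
  classical
  induction s using Finset.cons_induction with
  | empty => simpa
  | cons a t hat ih =>
    rw [Finset.sum_cons]
    refine lt_of_le_of_lt (my_norm_add_le_max _ _) (max_lt (h a (by simp)) ?_)
    exact ih fun i hi => h i (Finset.mem_cons_of_mem hi)

lemma norm_finset_sum_eq_of_max {ι : Type*} {s : Finset ι} {f : ι → K} {i₀ : ι}
    (hi : i₀ ∈ s) (h0 : 0 < ‖f i₀‖)
    (h : ∀ i ∈ s, i ≠ i₀ → ‖f i‖ < ‖f i₀‖) : ‖∑ i ∈ s, f i‖ = ‖f i₀‖ := by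
  classical
  rw [← Finset.add_sum_erase _ _ hi]
  exact my_norm_add_eq _ _ (norm_finset_sum_lt h0 fun i hi' =>
    h i (Finset.mem_of_mem_erase hi') (Finset.ne_of_mem_erase hi'))

lemma my_norm_multiset_prod (s : Multiset K) : ‖s.prod‖ = (s.map norm).prod := by
  induction s using Multiset.induction with
  | empty => simp
  | cons a t ih => simp [norm_mul, ih]

end Aux

section Coeff
variable {K : Type*} [NormedField K] [IsUltrametricDist K]

lemma coeff_X_sub_C_mul_zero (r : K) (Q : K[X]) :
    ((X - C r) * Q).coeff 0 = -(r * Q.coeff 0) := by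
  rw [mul_coeff_zero]
  simp

lemma coeff_X_sub_C_mul_succ (r : K) (Q : K[X]) (i : ℕ) :
    ((X - C r) * Q).coeff (i + 1) = Q.coeff i - r * Q.coeff (i + 1) := by
  rw [sub_mul, coeff_sub, coeff_X_mul, coeff_C_mul]

lemma prod_norm_pos {t : Multiset K} {e : ℝ} (he : 0 < e) (h : ∀ x ∈ t, e ≤ ‖x‖) :
    0 < (t.map norm).prod := by
  refine Multiset.prod_pos fun a ha => ?_
  obtain ⟨x, hx, rfl⟩ := Multiset.mem_map.1 ha
  exact lt_of_lt_of_le he (h x hx)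

/-- upper bound for coefficients of a product of `X - C r` with all `‖r‖ ≥ e`. -/
lemma coeff_prod_le (t : Multiset K) {e : ℝ} (he : 0 < e) (h : ∀ x ∈ t, e ≤ ‖x‖) (i : ℕ) :
    ‖(t.map (fun r => X - C r)).prod.coeff i‖ * e ^ i ≤ (t.map norm).prod := by
  induction t using Multiset.induction generalizing i with
  | empty =>
    cases i with
    | zero => simp
    | succ j => simp [coeff_one, Nat.succ_ne_zero, (pow_pos he _).le]
  | cons r t ih =>
    have hr : e ≤ ‖r‖ := h r (Multiset.mem_cons_self r t)
    have ht : ∀ x ∈ t, e ≤ ‖x‖ := fun x hx => h x (Multiset.mem_cons_of_mem hx)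
    have hP : 0 < (t.map norm).prod := prod_norm_pos he ht
    rw [Multiset.map_cons, Multiset.prod_cons, Multiset.map_cons, Multiset.prod_cons]
    cases i with
    | zero =>
      rw [coeff_X_sub_C_mul_zero, pow_zero, mul_one, norm_neg, norm_mul]
      exact mul_le_mul_of_nonneg_left (by simpa using ih ht 0) (norm_nonneg r)
    | succ j =>
      rw [coeff_X_sub_C_mul_succ]
      refine le_trans (mul_le_mul_of_nonneg_right (my_norm_sub_le_max _ _)
        (by positivity)) ?_
      rw [max_mul_of_nonneg _ _ (by positivity)]
      refine max_le ?_ ?_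
      · have h1 : ‖(t.map (fun r => X - C r)).prod.coeff j‖ * e ^ (j + 1)
            = (‖(t.map (fun r => X - C r)).prod.coeff j‖ * e ^ j) * e := by ring
        rw [h1]
        calc (‖(t.map (fun r => X - C r)).prod.coeff j‖ * e ^ j) * e
            ≤ (t.map norm).prod * e := mul_le_mul_of_nonneg_right (ih ht j) he.le
          _ ≤ (t.map norm).prod * ‖r‖ := mul_le_mul_of_nonneg_left hr hP.le
          _ = ‖r‖ * (t.map norm).prod := mul_comm _ _
      · rw [norm_mul, mul_assoc]
        exact mul_le_mul_of_nonneg_left (ih ht (j + 1)) (norm_nonneg r)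

/-- strict upper bound, positive index, all `‖r‖ > e`. -/
lemma coeff_prod_lt (t : Multiset K) {e : ℝ} (he : 0 < e) (h : ∀ x ∈ t, e < ‖x‖) (i : ℕ) :
    ‖(t.map (fun r => X - C r)).prod.coeff (i + 1)‖ * e ^ (i + 1) < (t.map norm).prod := by
  induction t using Multiset.induction generalizing i with
  | empty => simp [coeff_one, Nat.succ_ne_zero, (pow_pos he _)]
  | cons r t ih =>
    have hr : e < ‖r‖ := h r (Multiset.mem_cons_self r t)
    have ht : ∀ x ∈ t, e < ‖x‖ := fun x hx => h x (Multiset.mem_cons_of_mem hx)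
    have ht' : ∀ x ∈ t, e ≤ ‖x‖ := fun x hx => (ht x hx).le
    have hP : 0 < (t.map norm).prod := prod_norm_pos he ht'
    rw [Multiset.map_cons, Multiset.prod_cons, Multiset.map_cons, Multiset.prod_cons,
      coeff_X_sub_C_mul_succ]
    refine lt_of_le_of_lt (mul_le_mul_of_nonneg_right (my_norm_sub_le_max _ _)
      (by positivity)) ?_
    rw [max_mul_of_nonneg _ _ (by positivity)]
    refine max_lt ?_ ?_
    · have h1 : ‖(t.map (fun r => X - C r)).prod.coeff i‖ * e ^ (i + 1)
          = (‖(t.map (fun r => X - C r)).prod.coeff i‖ * e ^ i) * e := by ring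
      rw [h1]
      cases i with
      | zero =>
        calc (‖(t.map (fun r => X - C r)).prod.coeff 0‖ * e ^ 0) * e
            ≤ (t.map norm).prod * e :=
              mul_le_mul_of_nonneg_right (coeff_prod_le t he ht' 0) he.le
          _ < (t.map norm).prod * ‖r‖ := (mul_lt_mul_iff_right₀ hP).2 hr
          _ = ‖r‖ * (t.map norm).prod := mul_comm _ _
      | succ j =>
        calc (‖(t.map (fun r => X - C r)).prod.coeff (j + 1)‖ * e ^ (j + 1)) * e
            < (t.map norm).prod * e := (mul_lt_mul_iff_left₀ he).2 (ih ht j)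
          _ < (t.map norm).prod * ‖r‖ := (mul_lt_mul_iff_right₀ hP).2 hr
          _ = ‖r‖ * (t.map norm).prod := mul_comm _ _
    · rw [norm_mul, mul_assoc]
      calc ‖r‖ * (‖(t.map (fun r => X - C r)).prod.coeff (i + 1)‖ * e ^ (i + 1))
          < ‖r‖ * (t.map norm).prod :=
            (mul_lt_mul_iff_right₀ (he.trans hr)).2 (ih ht i)

lemma norm_coeff_zero_prod (t : Multiset K) :
    ‖(t.map (fun r => X - C r)).prod.coeff 0‖ = (t.map norm).prod := by
  induction t using Multiset.induction with
  | empty => simp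
  | cons r t ih =>
    rw [Multiset.map_cons, Multiset.prod_cons, coeff_X_sub_C_mul_zero, norm_neg, norm_mul,
      Multiset.map_cons, Multiset.prod_cons, ih]

end Coeff

lemma key_gamma {K : Type*} [NormedField K] [IsUltrametricDist K] [IsAlgClosed K]
    {q : K[X]} (hq0 : q.coeff 0 ≠ 0) {r₀ : K} (hr₀ : r₀ ∈ q.roots)
    (hmin : ∀ r ∈ q.roots, ‖r₀‖ ≤ ‖r‖) :
    (⨆ k : ℕ, ‖q.coeff (k + 1) / q.coeff 0‖ ^ ((1 : ℝ) / (k + 1))) = 1 / ‖r₀‖ := by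
  classical
  have hq : q ≠ 0 := fun h => hq0 (by simp [h])
  have hr0ne : r₀ ≠ 0 := by
    rintro rfl
    exact hq0 (by simpa [coeff_zero_eq_eval_zero] using isRoot_of_mem_roots hr₀)
  set d : ℝ := ‖r₀‖ with hd_def
  have hd : 0 < d := norm_pos_iff.2 hr0ne
  set s : Multiset K := q.roots with hs_def
  set c : K := q.leadingCoeff with hc_def
  have hc : c ≠ 0 := leadingCoeff_ne_zero.2 hq
  have hcpos : 0 < ‖c‖ := norm_pos_iff.2 hc
  have hsplit : q = C c * (s.map fun r => X - C r).prod :=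
    (IsAlgClosed.splits q).eq_prod_roots
  have hcoeff : ∀ j, q.coeff j = c * ((s.map fun r => X - C r).prod.coeff j) := by
    intro j
    conv_lhs => rw [hsplit]
    rw [coeff_C_mul]
  have hall : ∀ x ∈ s, d ≤ ‖x‖ := hmin
  have hsprod : ‖q.coeff 0‖ = ‖c‖ * (s.map norm).prod := by
    rw [hcoeff 0, norm_mul, norm_coeff_zero_prod]
  have hspos : 0 < (s.map norm).prod := prod_norm_pos hd hall
  -- rpow helper
  have hpow : ∀ k : ℕ, ((1 / d) ^ (k + 1) : ℝ) ^ ((1 : ℝ) / (k + 1)) = 1 / d := by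
    intro k
    have h1 : ((k : ℝ) + 1) ≠ 0 := by positivity
    have h2 : (0 : ℝ) ≤ 1 / d := by positivity
    rw [← Real.rpow_natCast (1 / d) (k + 1), ← Real.rpow_mul h2]
    push_cast
    rw [mul_one_div_cancel h1, Real.rpow_one]
  -- upper bound
  have hub : ∀ k : ℕ, ‖q.coeff (k + 1) / q.coeff 0‖ ^ ((1 : ℝ) / (k + 1)) ≤ 1 / d := by
    intro k
    rw [← hpow k]
    refine Real.rpow_le_rpow (norm_nonneg _) ?_ (by positivity)
    rw [norm_div, hcoeff (k + 1), norm_mul, hsprod]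
    have hb := coeff_prod_le s hd hall (k + 1)
    rw [one_div_pow, div_le_div_iff₀ (by positivity) (pow_pos hd _)]
    calc ‖c‖ * ‖(s.map fun r => X - C r).prod.coeff (k + 1)‖ * d ^ (k + 1)
        = ‖c‖ * (‖(s.map fun r => X - C r).prod.coeff (k + 1)‖ * d ^ (k + 1)) := by ring
      _ ≤ ‖c‖ * (s.map norm).prod := mul_le_mul_of_nonneg_left hb hcpos.le
      _ = 1 * (‖c‖ * (s.map norm).prod) := (one_mul _).symm
  -- the minimal-norm part
  set smin : Multiset K := s.filter (fun x => ‖x‖ = d) with hsmin_def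
  set sbig : Multiset K := s.filter (fun x => ¬ ‖x‖ = d) with hsbig_def
  have hsplit2 : smin + sbig = s := Multiset.filter_add_not _ s
  have hminmem : r₀ ∈ smin := Multiset.mem_filter.2 ⟨hr₀, rfl⟩
  have hsminnorm : ∀ x ∈ smin, ‖x‖ = d := fun x hx => (Multiset.mem_filter.1 hx).2
  have hsbignorm : ∀ x ∈ sbig, d < ‖x‖ := by
    intro x hx
    obtain ⟨hxs, hxne⟩ := Multiset.mem_filter.1 hx
    exact lt_of_le_of_ne (hall x hxs) (Ne.symm hxne)
  set m : ℕ := Multiset.card smin with hm_def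
  have hm1 : 1 ≤ m := Multiset.card_pos_iff_exists_mem.2 ⟨r₀, hminmem⟩
  obtain ⟨m', hm'⟩ : ∃ m', m = m' + 1 := ⟨m - 1, (Nat.succ_pred_eq_of_pos hm1).symm⟩
  set A : K[X] := (smin.map fun r => X - C r).prod with hA_def
  set B : K[X] := (sbig.map fun r => X - C r).prod with hB_def
  have hAB : (s.map fun r => X - C r).prod = A * B := by
    rw [← hsplit2, Multiset.map_add, Multiset.prod_add]
  have hA_monic : A.Monic := monic_multiset_prod_of_monic _ _ fun a _ => monic_X_sub_C a
  have hA_deg : A.natDegree = m := by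
    rw [hA_def, natDegree_multiset_prod_X_sub_C_eq_card]
  have hA_top : A.coeff m = 1 := by
    rw [← hA_deg]
    exact hA_monic.coeff_natDegree
  have hAprodnorm : (smin.map norm).prod = d ^ m := by
    have : smin.map norm = Multiset.replicate m d := by
      rw [Multiset.eq_replicate]
      constructor
      · simp [hm_def]
      · intro b hb
        obtain ⟨x, hx, rfl⟩ := Multiset.mem_map.1 hb
        exact hsminnorm x hx
    rw [this, Multiset.prod_replicate]
  have hBpos : 0 < (sbig.map norm).prod :=
    prod_norm_pos hd fun x hx => (hsbignorm x hx).le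
  have hB0 : ‖B.coeff 0‖ = (sbig.map norm).prod := norm_coeff_zero_prod sbig
  have hAi : ∀ i j : ℕ, i + j = m → ‖A.coeff i‖ ≤ d ^ j := by
    intro i j hij
    have hb := coeff_prod_le smin hd (fun x hx => (hsminnorm x hx).ge) i
    rw [hAprodnorm, ← hij, pow_add, mul_comm (d ^ i)] at hb
    exact le_of_mul_le_mul_right hb (pow_pos hd i)
  -- the exact coefficient norm at index m
  have hcm : ‖(s.map fun r => X - C r).prod.coeff m‖ = (sbig.map norm).prod := by
    rw [hAB, coeff_mul]
    have hmem : ((m, 0) : ℕ × ℕ) ∈ Finset.HasAntidiagonal.antidiagonal m := by simp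
    have hval : ‖A.coeff (m, 0).1 * B.coeff (m, 0).2‖ = (sbig.map norm).prod := by
      simp only [hA_top, one_mul]
      exact hB0
    rw [norm_finset_sum_eq_of_max hmem (by rw [hval]; exact hBpos) ?_, hval]
    rintro ⟨i, j⟩ hijmem hne
    have hij : i + j = m := Finset.HasAntidiagonal.mem_antidiagonal.1 hijmem
    have hj : j ≠ 0 := by
      rintro rfl
      exact hne (by simp [← hij])
    obtain ⟨j', rfl⟩ : ∃ j', j = j' + 1 := ⟨j - 1, (Nat.succ_pred_eq_of_pos (Nat.pos_of_ne_zero hj)).symm⟩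
    rw [hval, norm_mul]
    calc ‖A.coeff (i, j' + 1).1‖ * ‖B.coeff (i, j' + 1).2‖
        ≤ d ^ (j' + 1) * ‖B.coeff (j' + 1)‖ :=
          mul_le_mul_of_nonneg_right (hAi i (j' + 1) hij) (norm_nonneg _)
      _ = ‖B.coeff (j' + 1)‖ * d ^ (j' + 1) := mul_comm _ _
      _ < (sbig.map norm).prod := coeff_prod_lt sbig hd hsbignorm j'
  -- exact value of the m-th term
  have hsprodsplit : (s.map norm).prod = d ^ m * (sbig.map norm).prod := by
    rw [← hsplit2, Multiset.map_add, Multiset.prod_add, hAprodnorm]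
  have hratio : ‖q.coeff m / q.coeff 0‖ = (1 / d) ^ m := by
    rw [norm_div, hcoeff m, norm_mul, hcm, hsprod, hsprodsplit, one_div_pow]
    rw [div_eq_div_iff (by positivity) (by positivity : (d:ℝ) ^ m ≠ 0)]
    ring
  have hexact : ‖q.coeff (m' + 1) / q.coeff 0‖ ^ ((1 : ℝ) / (m' + 1)) = 1 / d := by
    rw [← hm', hratio, hm', hpow m']
  -- conclude
  have hbdd : BddAbove (Set.range fun k : ℕ =>
      ‖q.coeff (k + 1) / q.coeff 0‖ ^ ((1 : ℝ) / (k + 1))) := by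
    refine ⟨1 / d, ?_⟩
    rintro x ⟨k, rfl⟩
    exact hub k
  exact le_antisymm (ciSup_le hub) (le_ciSup_of_le hbdd m' hexact.ge)


/-- Ultrametric separation theorem for γ: at a simple root `ζ` in the algebraic
closure (modelled by an algebraically closed isometric normed field extension
`K` of `F`), `1/γ(f,ζ)` is the minimum distance to the other roots of `f`;
if `ζ` is the only root then `γ(f,ζ) = 0` (i.e. `1/γ = +∞`). -/
theorem ultrametric_gamma_separation
    {F : Type*} [NormedField F] [IsUltrametricDist F] [CompleteSpace F] [CharZero F]
    {K : Type*} [NormedField K] [IsUltrametricDist K] [IsAlgClosed K]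
    [Algebra F K] (hiso : ∀ a : F, ‖algebraMap F K a‖ = ‖a‖)
    (halg : Algebra.IsAlgebraic F K)
    (f : F[X]) (hf : f ≠ 0) (ζ : K)
    (hroot : (f.map (algebraMap F K)).eval ζ = 0)
    (hsimple : (f.map (algebraMap F K)).derivative.eval ζ ≠ 0) :
    ((∀ η : K, (f.map (algebraMap F K)).eval η = 0 → η = ζ) →
        sgamma (f.map (algebraMap F K)) ζ = 0) ∧
      ((∃ η : K, (f.map (algebraMap F K)).eval η = 0 ∧ η ≠ ζ) →
        ∃ η : K, (f.map (algebraMap F K)).eval η = 0 ∧ η ≠ ζ ∧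
          ‖ζ - η‖ = 1 / sgamma (f.map (algebraMap F K)) ζ ∧
          ∀ η' : K, (f.map (algebraMap F K)).eval η' = 0 → η' ≠ ζ →
            1 / sgamma (f.map (algebraMap F K)) ζ ≤ ‖ζ - η'‖) := by
  classical
  have hKchar : CharZero K := charZero_of_injective_algebraMap (algebraMap F K).injective
  set g : K[X] := f.map (algebraMap F K) with hg_def
  set p : K[X] := taylor ζ g with hp_def
  set q : K[X] := p.divX with hq_def
  have hp1 : p.coeff 1 = g.derivative.eval ζ := by
    rw [hp_def, taylor_coeff, hasseDeriv_one]
  have hq0 : q.coeff 0 ≠ 0 := by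
    rw [hq_def, coeff_divX, hp1]
    exact hsimple
  have hqne : q ≠ 0 := fun h => hq0 (by simp [h])
  have hp0 : p.coeff 0 = 0 := by
    rw [hp_def, taylor_coeff_zero]
    exact hroot
  have hpq : p = q * X := by
    conv_lhs => rw [← divX_mul_X_add p]
    rw [hp0, map_zero, add_zero]
  -- iterated derivatives as taylor coefficients
  have hfact : ∀ n : ℕ, ((⇑(derivative (R := K)))^[n] g).eval ζ = (n.factorial : K) * p.coeff n := by
    intro n
    rw [hp_def, taylor_coeff, ← Polynomial.factorial_smul_hasseDeriv]
    simp [nsmul_eq_mul]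
  have hterm : ∀ k : ℕ,
      ‖((⇑(derivative (R := K)))^[k + 2] g).eval ζ /
        (((k + 2).factorial : K) * g.derivative.eval ζ)‖ ^ ((1 : ℝ) / (k + 1))
      = ‖q.coeff (k + 1) / q.coeff 0‖ ^ ((1 : ℝ) / (k + 1)) := by
    intro k
    have hf2 : ((k + 2).factorial : K) ≠ 0 := Nat.cast_ne_zero.2 (Nat.factorial_ne_zero _)
    rw [hfact (k + 2), ← hp1, mul_div_mul_left _ _ hf2, hq_def, coeff_divX, coeff_divX]
  have hsg : sgamma g ζ = ⨆ k : ℕ, ‖q.coeff (k + 1) / q.coeff 0‖ ^ ((1 : ℝ) / (k + 1)) := by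
    rw [sgamma]
    exact iSup_congr hterm
  -- root correspondence
  have hmemroots : ∀ η : K, g.eval η = 0 → η ≠ ζ → η - ζ ∈ q.roots := by
    intro η hη hne
    have hr' : η - ζ ≠ 0 := sub_ne_zero.2 hne
    have hpe : p.eval (η - ζ) = 0 := by
      rw [hp_def, taylor_eval_sub]
      exact hη
    rw [hpq, eval_mul, eval_X, mul_eq_zero] at hpe
    have hqe : q.eval (η - ζ) = 0 := hpe.resolve_right hr'
    exact (mem_roots hqne).2 hqe
  constructor
  · -- only root
    intro hall
    have hroots0 : q.roots = 0 := by
      refine Multiset.eq_zero_of_forall_notMem fun r hr => ?_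
      have hqr : q.eval r = 0 := isRoot_of_mem_roots hr
      have hpr : p.eval r = 0 := by rw [hpq, eval_mul, eval_X, hqr, zero_mul]
      have hgr : g.eval (r + ζ) = 0 := by
        rw [← taylor_eval ζ g, ← hp_def]
        exact hpr
      have : r + ζ = ζ := hall _ hgr
      have hr0 : r = 0 := add_eq_right.1 this
      rw [hr0] at hqr
      rw [coeff_zero_eq_eval_zero] at hq0
      exact hq0 hqr
    have hdeg : q.natDegree = 0 := by
      have := (splits_iff_card_roots).1 (IsAlgClosed.splits q)
      rw [hroots0] at this
      simpa using this.symm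
    have hczero : ∀ k : ℕ, q.coeff (k + 1) = 0 := fun k =>
      coeff_eq_zero_of_natDegree_lt (by omega)
    rw [hsg]
    have : ∀ k : ℕ, ‖q.coeff (k + 1) / q.coeff 0‖ ^ ((1 : ℝ) / (k + 1)) = 0 := by
      intro k
      rw [hczero k, zero_div, norm_zero, Real.zero_rpow (by positivity)]
    rw [iSup_congr this]
    exact ciSup_const
  · -- other roots exist
    rintro ⟨η, hη, hne⟩
    have hr' : η - ζ ∈ q.roots := hmemroots η hη hne
    obtain ⟨r₀, hr₀f, hminf⟩ := q.roots.toFinset.exists_min_image norm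
      ⟨η - ζ, Multiset.mem_toFinset.2 hr'⟩
    have hr₀ : r₀ ∈ q.roots := Multiset.mem_toFinset.1 hr₀f
    have hmin : ∀ r ∈ q.roots, ‖r₀‖ ≤ ‖r‖ := fun r hrr =>
      hminf r (Multiset.mem_toFinset.2 hrr)
    have hr0ne : r₀ ≠ 0 := by
      rintro rfl
      rw [coeff_zero_eq_eval_zero] at hq0
      exact hq0 (isRoot_of_mem_roots hr₀)
    have hd : (0:ℝ) < ‖r₀‖ := norm_pos_iff.2 hr0ne
    have hsup := key_gamma hq0 hr₀ hmin
    have hsgval : sgamma g ζ = 1 / ‖r₀‖ := by rw [hsg, hsup]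
    have hinv : 1 / sgamma g ζ = ‖r₀‖ := by rw [hsgval, one_div_one_div]
    refine ⟨r₀ + ζ, ?_, ?_, ?_, ?_⟩
    · rw [← taylor_eval ζ g, ← hp_def, hpq, eval_mul, eval_X,
        isRoot_of_mem_roots hr₀, zero_mul]
    · intro h
      exact hr0ne (add_eq_right.1 h)
    · rw [hinv]
      have : ζ - (r₀ + ζ) = -r₀ := by ring
      rw [this, norm_neg]
    · intro η' hη' hne'
      rw [hinv]
      have := hmin _ (hmemroots η' hη' hne')
      rwa [norm_sub_rev] at this
end

section
/- Let f ∈ F[X], x ∈ F with f'(x) ≠ 0, and suppose ζ is a root of f with γ(f,x)·|ζ - x| < 1. Then |f(x)/f'(x)| = |ζ - x|; in particular the Newton step length β(f,x) equals the exact distance to the root ζ. -/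
open Polynomial Filter

/-- If `ζ` is a root of `f` with `γ(f,x)·|ζ-x| < 1`, then the Newton step
length equals the distance to the root: `|f(x)/f'(x)| = |ζ-x|`. -/
theorem ultrametric_beta_eq_dist_root
    {F : Type*} [NormedField F] [IsUltrametricDist F] [CompleteSpace F] [CharZero F]
    (f : F[X]) (x ζ : F) (hx : f.derivative.eval x ≠ 0)
    (hζ : f.eval ζ = 0) (h : sgamma f x * ‖ζ - x‖ < 1) :
    ‖f.eval x / f.derivative.eval x‖ = ‖ζ - x‖ := by
  set b : F := ζ - x with hbdef
  set D : F := f.derivative.eval x with hD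
  by_cases hb0 : b = 0
  · have hzx : ζ = x := by rwa [sub_eq_zero] at hb0
    have hfx : f.eval x = 0 := by rwa [hzx] at hζ
    simp [hb0, hfx]
  have hbpos : 0 < ‖b‖ := norm_pos_iff.mpr hb0
  -- the per-term quantities
  set t : ℕ → ℝ := fun k =>
    ‖((⇑(derivative (R := F)))^[k + 2] f).eval x /
        (((k + 2).factorial : F) * D)‖ with ht
  set u : ℕ → ℝ := fun k => t k ^ ((1 : ℝ) / (k + 1)) with hu
  have hgam : sgamma f x = ⨆ k, u k := rfl
  have hunonneg : ∀ k, 0 ≤ u k := fun k => Real.rpow_nonneg (norm_nonneg _) _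
  have hγ0 : 0 ≤ sgamma f x := by
    rw [hgam]; exact Real.iSup_nonneg hunonneg
  -- u vanishes for large k
  have huzero : ∀ k, f.natDegree < k → u k = 0 := by
    intro k hk
    have hd : ((⇑(derivative (R := F)))^[k + 2] f) = 0 := by
      apply Polynomial.iterate_derivative_eq_zero; omega
    have h0 : t k = 0 := by simp only [ht, hd, Polynomial.eval_zero, zero_div, norm_zero]
    rw [hu]
    simp only [h0]
    rw [Real.zero_rpow]
    positivity
  have hbdd : BddAbove (Set.range u) := by
    apply Set.Finite.bddAbove
    apply Set.Finite.subset (Set.Finite.insert 0 ((Set.finite_Iic f.natDegree).image u))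
    rintro y ⟨k, rfl⟩
    by_cases hk : k ≤ f.natDegree
    · exact Set.mem_insert_iff.mpr (Or.inr ⟨k, hk, rfl⟩)
    · exact Set.mem_insert_iff.mpr (Or.inl (huzero k (by omega)))
  have hule : ∀ k, u k ≤ sgamma f x := fun k => by rw [hgam]; exact le_ciSup hbdd k
  have htle : ∀ k, t k ≤ sgamma f x ^ (k + 1) := by
    intro k
    have hne : ((k : ℝ) + 1) ≠ 0 := by positivity
    have h1 : t k = u k ^ (k + 1) := by
      rw [hu, ← Real.rpow_natCast (t k ^ ((1:ℝ)/(k+1))) (k+1),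
        ← Real.rpow_mul (norm_nonneg _)]
      push_cast
      rw [one_div_mul_cancel hne, Real.rpow_one]
    rw [h1]
    exact pow_le_pow_left₀ (hunonneg k) (hule k) _
  -- the Taylor coefficients
  set g : F[X] := Polynomial.taylor x f with hg
  set n : ℕ := f.natDegree with hn
  have hgn : g.natDegree = n := Polynomial.natDegree_taylor f x
  have hcoeff : ∀ k : ℕ, g.coeff (k + 2) / D =
      ((⇑(derivative (R := F)))^[k + 2] f).eval x / (((k + 2).factorial : F) * D) := by
    intro k
    have h1 : ((⇑(derivative (R := F)))^[k + 2]) f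
        = ((k + 2).factorial • Polynomial.hasseDeriv (k + 2) (R := F)) f := by
      rw [Polynomial.factorial_smul_hasseDeriv]
    have h2 : ((⇑(derivative (R := F)))^[k + 2] f).eval x
        = ((k + 2).factorial : F) * (Polynomial.hasseDeriv (k + 2) f).eval x := by
      rw [h1]; simp [nsmul_eq_mul]
    have hfac : (((k + 2).factorial : F)) ≠ 0 :=
      Nat.cast_ne_zero.mpr (Nat.factorial_ne_zero _)
    rw [h2, Polynomial.taylor_coeff]
    field_simp
  -- per-term strict bound
  have hterm : ∀ k : ℕ, ‖(-(g.coeff (k + 2)) / D) * b ^ (k + 2)‖ < ‖b‖ := by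
    intro k
    have hnorm : ‖(-(g.coeff (k + 2)) / D) * b ^ (k + 2)‖ = t k * ‖b‖ ^ (k + 2) := by
      rw [norm_mul, norm_pow, neg_div, norm_neg, hcoeff k]
    rw [hnorm]
    calc t k * ‖b‖ ^ (k + 2) = (t k * ‖b‖ ^ (k + 1)) * ‖b‖ := by ring
      _ ≤ (sgamma f x ^ (k + 1) * ‖b‖ ^ (k + 1)) * ‖b‖ := by
          apply mul_le_mul_of_nonneg_right _ (norm_nonneg b)
          exact mul_le_mul_of_nonneg_right (htle k) (by positivity)
      _ = (sgamma f x * ‖b‖) ^ (k + 1) * ‖b‖ := by rw [mul_pow]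
      _ < 1 * ‖b‖ := by
          apply mul_lt_mul_of_pos_right _ hbpos
          exact pow_lt_one₀ (mul_nonneg hγ0 (norm_nonneg b)) h (by omega)
      _ = ‖b‖ := one_mul _
  -- Taylor expansion of f at x evaluated at ζ
  have hn1 : 1 ≤ n := by
    by_contra hcon
    have hn0 : f.natDegree = 0 := by omega
    obtain ⟨c, rfl⟩ := Polynomial.natDegree_eq_zero.mp hn0
    rw [hD] at hx
    simp at hx
  have hev : (0 : F) = ∑ i ∈ Finset.range (n + 1), g.coeff i * b ^ i := by
    have hbx : ζ = b + x := by rw [hbdef]; ring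
    rw [← hζ, hbx, ← Polynomial.taylor_eval x f b]
    exact Polynomial.eval_eq_sum_range' (by omega : g.natDegree < n + 1) b
  have hsplit : f.eval x + D * b + (∑ i ∈ Finset.Ico 2 (n + 1), g.coeff i * b ^ i) = 0 := by
    have hsum := Finset.sum_range_add_sum_Ico (fun i => g.coeff i * b ^ i)
      (show 2 ≤ n + 1 by omega)
    have h2 : ∑ i ∈ Finset.range 2, g.coeff i * b ^ i = f.eval x + D * b := by
      rw [Finset.sum_range_succ, Finset.sum_range_one, hg, Polynomial.taylor_coeff_zero,
        Polynomial.taylor_coeff_one, ← hD]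
      ring
    linear_combination -h2 + hsum - hev
  -- key identity
  have key : f.eval x / D + b = ∑ i ∈ Finset.Ico 2 (n + 1), (-(g.coeff i) / D) * b ^ i := by
    have h2 : ∑ i ∈ Finset.Ico 2 (n + 1), (-(g.coeff i) / D) * b ^ i
        = (-1 / D) * ∑ i ∈ Finset.Ico 2 (n + 1), g.coeff i * b ^ i := by
      rw [Finset.mul_sum]
      exact Finset.sum_congr rfl fun i _ => by ring
    have hT : ∑ i ∈ Finset.Ico 2 (n + 1), g.coeff i * b ^ i = -(f.eval x) - D * b := by
      linear_combination hsplit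
    rw [h2, hT]
    field_simp
    ring
  -- strict bound on the sum
  have hlt : ‖f.eval x / D + b‖ < ‖b‖ := by
    rw [key]
    rcases (Finset.Ico 2 (n + 1)).eq_empty_or_nonempty with he | hne
    · rw [he, Finset.sum_empty, norm_zero]; exact hbpos
    · obtain ⟨i, hit, hle⟩ := IsUltrametricDist.exists_norm_finset_sum_le_of_nonempty hne
        (fun i => (-(g.coeff i) / D) * b ^ i)
      refine hle.trans_lt ?_
      obtain ⟨k, rfl⟩ : ∃ k, i = k + 2 := ⟨i - 2, by have := (Finset.mem_Ico.mp hit).1; omega⟩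
      exact hterm k
  -- isosceles triangle
  have heq : f.eval x / D = (f.eval x / D + b) + (-b) := by ring
  rw [heq, IsUltrametricDist.norm_add_eq_max_of_norm_ne_norm
    (by rw [norm_neg]; exact hlt.ne), norm_neg]
  exact max_eq_right hlt.le
end
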